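/- If a transitive subgroup of Sym(n) is generated by x of order 2 and y of order 3 with xy of order 7, where x fixes r points, y fixes s points and xy fixes t points, then 21r + 28s + 36t ≡ n (mod 84) and 21r + 28s + 36t ≤ n + 84. -/

import Mathlib

/-!
Write `c(g)` for the number of cycles of a permutation `g`, fixed points included. If `g` has
prime order `p`, `f` fixed points and `k` cycles of length `p`, then `n = f + p k` and
`c(g) = f + k`. As `y` and `xy` have odd order, they are even permutations, hence so is `x`, and
the number of 2-cycles of `x` is even. With `r, s, t` the numbers of fixed points, these
relations give `21r + 28s + 36t ≡ n (mod 84)`, and they turn the inequality into Ree's inequality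
`c(x) + c(y) + c(xy) ≤ n + 2` for the transitive group `⟨x, y⟩`.

Ree's inequality is proved by induction, peeling a transposition `(u v)` off `y`. Multiplying
any `g` by `(u v)` changes `c(g)` by exactly one, up when `u, v` lie in a common cycle of `g` and
down otherwise: `g` and `g (u v)`, together with `(u v)`, generate the same group `K`, whose number
`N` of orbits is `c(g)` or `c(g) - 1` according to that alternative, so both cycle counts lie in
`[N, N + 1]`; and they differ, because `g` and `g (u v)` have different signs.
-/

open Finset

namespace Setoid

variable {α : Type*}

def glue (r : Setoid α) (u v : α) : Setoid α where
  r a b := r a b ∨ r a u ∧ r v b ∨ r a v ∧ r u b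
  iseqv := by
    have symm : ∀ {a b}, r a b → r b a := r.symm
    have trans : ∀ {a b c}, r a b → r b c → r a c := r.trans
    refine ⟨fun a => Or.inl (r.refl a), ?_, ?_⟩
    · rintro a b (h | ⟨h₁, h₂⟩ | ⟨h₁, h₂⟩)
      · exact Or.inl (symm h)
      · exact Or.inr (Or.inr ⟨symm h₂, symm h₁⟩)
      · exact Or.inr (Or.inl ⟨symm h₂, symm h₁⟩)
    · rintro a b c (h | ⟨h₁, h₂⟩ | ⟨h₁, h₂⟩) (h' | ⟨h₁', h₂'⟩ | ⟨h₁', h₂'⟩) <;>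
        grind

variable {r : Setoid α} {u v : α}

theorem le_glue : r ≤ r.glue u v := fun _ _ h => Or.inl h

theorem glue_eq_self (h : r u v) : r.glue u v = r := by
  refine le_antisymm (fun a b hab => ?_) le_glue
  rcases hab with hab | ⟨h₁, h₂⟩ | ⟨h₁, h₂⟩
  · exact hab
  · exact r.trans h₁ (r.trans h h₂)
  · exact r.trans h₁ (r.trans (r.symm h) h₂)

theorem card_quotient_le_of_le [Finite α] {r s : Setoid α} (h : r ≤ s) :
    Nat.card (Quotient s) ≤ Nat.card (Quotient r) :=
  Nat.card_le_card_of_surjective (Quotient.map' id h) fun q =>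
    q.inductionOn fun a => ⟨⟦a⟧, rfl⟩

theorem card_quotient_glue [Finite α] (h : ¬ r u v) :
    Nat.card (Quotient (r.glue u v)) + 1 = Nat.card (Quotient r) := by
  classical
  let f : {q : Quotient r // q ≠ ⟦v⟧} → Quotient (r.glue u v) :=
    fun q => Quotient.map' id le_glue q.1
  have hf : Function.Bijective f := by
    constructor
    · rintro ⟨q₁, hq₁⟩ ⟨q₂, hq₂⟩ hq
      induction q₁ using Quotient.ind with | _ a
      induction q₂ using Quotient.ind with | _ b
      refine Subtype.ext (Quotient.sound ?_)
      rcases Quotient.exact hq with hab | ⟨-, hvb⟩ | ⟨hav, -⟩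
      · exact hab
      · exact absurd (Quotient.sound (r.symm hvb)) hq₂
      · exact absurd (Quotient.sound hav) hq₁
    · intro q
      induction q using Quotient.ind with | _ a
      by_cases ha : r a v
      · exact ⟨⟨⟦u⟧, fun huv => h (Quotient.exact huv)⟩,
          Quotient.sound (Or.inr (Or.inl ⟨r.refl u, r.symm ha⟩))⟩
      · exact ⟨⟨⟦a⟧, fun hav => ha (Quotient.exact hav)⟩, rfl⟩
  rw [← Nat.card_eq_of_bijective f hf, ← Finite.card_option,
    Nat.card_congr (Equiv.optionSubtypeNe _)]

def classwiseStabilizer (G : Type*) [Group G] [MulAction G α] (r : Setoid α) : Subgroup G where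
  carrier := {g | ∀ a, r (g • a) a}
  mul_mem' {g h} hg hh a := by
    rw [mul_smul]
    exact r.trans (hg _) (hh a)
  one_mem' a := by
    rw [one_smul]
  inv_mem' {g} hg a := r.symm (by simpa using hg (g⁻¹ • a))

end Setoid

namespace MulAction

variable {G α : Type*} [Group G] [MulAction G α]

noncomputable def numOrbits (G α : Type*) [Group G] [MulAction G α] : ℕ :=
  Nat.card (orbitRel.Quotient G α)

theorem numOrbits_le_card [Finite α] : numOrbits G α ≤ Nat.card α :=
  Nat.card_le_card_of_surjective _ Quotient.mk''_surjective

theorem numOrbits_le_one [IsPretransitive G α] : numOrbits G α ≤ 1 :=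
  have := (pretransitive_iff_subsingleton_quotient G α).mp ‹_›
  Finite.card_le_one_iff_subsingleton.mpr this

theorem orbitRel_subgroup_mono {H K : Subgroup G} (hHK : H ≤ K) :
    orbitRel H α ≤ orbitRel K α := by
  rintro a b ⟨h, rfl⟩
  exact ⟨⟨h, hHK h.2⟩, rfl⟩

theorem numOrbits_le_of_le [Finite α] {H K : Subgroup G} (hHK : H ≤ K) :
    numOrbits K α ≤ numOrbits H α :=
  Setoid.card_quotient_le_of_le (orbitRel_subgroup_mono hHK)

theorem orbitRel_le_of_le_classwiseStabilizer {H : Subgroup G} {r : Setoid α}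
    (h : H ≤ r.classwiseStabilizer G) : orbitRel H α ≤ r := by
  rintro a b ⟨g, rfl⟩
  exact h g.2 b

end MulAction

namespace Subgroup

variable {G : Type*} [Group G]

theorem zpowers_mul_sup_zpowers (a b : G) :
    zpowers (a * b) ⊔ zpowers b = zpowers a ⊔ zpowers b := by
  refine le_antisymm (sup_le ?_ le_sup_right) (sup_le ?_ le_sup_right) <;> rw [zpowers_le]
  · exact mul_mem (mem_sup_left (mem_zpowers a)) (mem_sup_right (mem_zpowers b))
  · simpa using
      mul_mem (mem_sup_left (mem_zpowers (a * b))) (inv_mem (mem_sup_right (mem_zpowers b)))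

theorem mul_mem_closure_pair (x y : G) : x * y ∈ closure {x, y} :=
  mul_mem (subset_closure (Set.mem_insert _ _)) (subset_closure (Set.mem_insert_of_mem _ rfl))

theorem closure_pair_le_closure_pair_mul_sup_zpowers (x y t : G) :
    closure {x, y} ≤ closure {x, y * t} ⊔ zpowers t := by
  rw [closure_le, Set.insert_subset_iff, Set.singleton_subset_iff]
  refine ⟨mem_sup_left (subset_closure (Set.mem_insert _ _)), ?_⟩
  have hyt : y * t ∈ closure {x, y * t} := subset_closure (Set.mem_insert_of_mem _ rfl)
  simpa using mul_mem (mem_sup_left hyt) (mem_sup_right (inv_mem (mem_zpowers t)))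

end Subgroup

namespace Equiv.Perm

open MulAction Subgroup

variable {α : Type*}

section Swap

variable [DecidableEq α]

theorem orbitRel_sup_zpowers_swap (G : Subgroup (Perm α)) (u v : α) :
    orbitRel ↥(G ⊔ zpowers (swap u v)) α = (orbitRel G α).glue u v := by
  set K := G ⊔ zpowers (swap u v)
  have hGK : orbitRel G α ≤ orbitRel K α := orbitRel_subgroup_mono le_sup_left
  refine le_antisymm (orbitRel_le_of_le_classwiseStabilizer (sup_le ?_ ?_)) ?_
  · exact fun g hg a => Setoid.le_glue (mem_orbit _ (⟨g, hg⟩ : G))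
  · rw [zpowers_le]
    intro a
    rw [Perm.smul_def, swap_apply_def]
    split_ifs with hau hav
    · subst hau
      exact Or.inr (Or.inr ⟨Setoid.refl' _ _, Setoid.refl' _ _⟩)
    · subst hav
      exact Or.inr (Or.inl ⟨Setoid.refl' _ _, Setoid.refl' _ _⟩)
    · exact Setoid.refl' _ a
  · have huv : orbitRel K α u v :=
      ⟨⟨swap u v, mem_sup_right (mem_zpowers _)⟩, swap_apply_right u v⟩
    rintro a b (hab | ⟨hau, hvb⟩ | ⟨hav, hub⟩)
    · exact hGK hab
    · exact (orbitRel K α).trans (hGK hau) ((orbitRel K α).trans huv (hGK hvb))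
    · exact (orbitRel K α).trans (hGK hav)
        ((orbitRel K α).trans ((orbitRel K α).symm huv) (hGK hub))

theorem numOrbits_sup_zpowers_swap_of_rel {G : Subgroup (Perm α)} {u v : α}
    (h : orbitRel G α u v) : numOrbits ↥(G ⊔ zpowers (swap u v)) α = numOrbits G α := by
  rw [numOrbits, orbitRel.Quotient, orbitRel_sup_zpowers_swap, Setoid.glue_eq_self h]
  rfl

theorem numOrbits_sup_zpowers_swap_of_not_rel [Finite α] {G : Subgroup (Perm α)} {u v : α}
    (h : ¬ orbitRel G α u v) :
    numOrbits ↥(G ⊔ zpowers (swap u v)) α + 1 = numOrbits G α := by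
  rw [numOrbits, orbitRel.Quotient, orbitRel_sup_zpowers_swap, Setoid.card_quotient_glue h]
  rfl

theorem numOrbits_le_numOrbits_sup_zpowers_swap_add_one [Finite α] (G : Subgroup (Perm α))
    (u v : α) : numOrbits G α ≤ numOrbits ↥(G ⊔ zpowers (swap u v)) α + 1 := by
  by_cases h : orbitRel G α u v
  · rw [numOrbits_sup_zpowers_swap_of_rel h]
    omega
  · rw [numOrbits_sup_zpowers_swap_of_not_rel h]

end Swap

/-- Fixed points count as cycles, unlike in `Equiv.Perm.cycleType`. -/
noncomputable def numCycles (g : Perm α) : ℕ := numOrbits (zpowers g) α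

theorem orbitRel_zpowers (g : Perm α) : orbitRel (zpowers g) α = SameCycle.setoid g := by
  ext a b
  rw [orbitRel_apply, mem_orbit_iff, Subgroup.exists_zpowers]
  exact sameCycle_comm.symm

theorem orbitRel_of_sameCycle {G : Subgroup (Perm α)} {g : Perm α} {a b : α} (hg : g ∈ G)
    (h : g.SameCycle a b) : orbitRel G α a b :=
  orbitRel_subgroup_mono (zpowers_le.mpr hg) (by rw [orbitRel_zpowers]; exact h)

theorem numCycles_le_card [Fintype α] (g : Perm α) : g.numCycles ≤ Fintype.card α :=
  Nat.card_eq_fintype_card (α := α) ▸ numOrbits_le_card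

variable [DecidableEq α] [Fintype α]

def cycleLabel (g : Perm α) (a : α) : α ⊕ Perm α :=
  if g a = a then .inl a else .inr (g.cycleOf a)

theorem sameCycle_iff_cycleLabel_eq (g : Perm α) (a b : α) :
    g.SameCycle a b ↔ g.cycleLabel a = g.cycleLabel b := by
  by_cases ha : g a = a <;> by_cases hb : g b = b <;>
    simp only [cycleLabel, ha, hb, if_true, if_false]
  · exact ⟨fun h => congrArg _ (h.eq_of_left ha), fun h => by cases h; rfl⟩
  · exact ⟨fun h => absurd (h.eq_of_left ha ▸ ha) hb, by simp⟩
  · exact ⟨fun h => absurd (h.eq_of_right hb ▸ hb) ha, by simp⟩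
  · rw [sameCycle_iff_cycleOf_eq_of_mem_support (mem_support.mpr ha) (mem_support.mpr hb)]
    simp

theorem image_cycleLabel (g : Perm α) :
    univ.image g.cycleLabel = ({a | g a = a} : Finset α).disjSum g.cycleFactorsFinset := by
  ext (a | c) <;> simp only [mem_image, mem_univ, true_and, inl_mem_disjSum, inr_mem_disjSum,
    mem_filter, cycleLabel]
  · constructor
    · rintro ⟨b, hb⟩
      split_ifs at hb with hgb
      cases hb
      exact hgb
    · exact fun ha => ⟨a, if_pos ha⟩
  · constructor
    · rintro ⟨b, hb⟩
      split_ifs at hb with hgb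
      cases hb
      exact cycleOf_mem_cycleFactorsFinset_iff.mpr (mem_support.mpr hgb)
    · intro hc
      obtain ⟨a, ha⟩ := (mem_cycleFactorsFinset_iff.mp hc).1.nonempty_support
      refine ⟨a, ?_⟩
      rw [if_neg (mem_support.mp (mem_cycleFactorsFinset_support_le hc ha)),
        ← cycle_is_cycleOf ha hc]

theorem numCycles_eq (g : Perm α) :
    g.numCycles = #{a | g a = a} + Multiset.card g.cycleType := by
  have hker : SameCycle.setoid g = Setoid.ker g.cycleLabel :=
    Setoid.ext (sameCycle_iff_cycleLabel_eq g)
  rw [numCycles, numOrbits, orbitRel.Quotient, orbitRel_zpowers, hker,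
    Nat.card_congr (Setoid.quotientKerEquivRange _), ← Set.image_univ, ← coe_univ,
    ← coe_image,
    SetLike.coe_sort_coe, Nat.card_eq_fintype_card, Fintype.card_coe, image_cycleLabel,
    card_disjSum, cycleType_def, Multiset.card_map]
  rfl

theorem numCycles_one : (1 : Perm α).numCycles = Fintype.card α := by
  simp [numCycles_eq]

theorem card_fixed_add_card_support (g : Perm α) :
    #{a | g a = a} + #g.support = Fintype.card α :=
  card_filter_add_card_filter_not _

theorem sign_eq_neg_one_pow_numCycles (g : Perm α) :
    sign g = (-1) ^ (Fintype.card α + g.numCycles) := by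
  rw [sign_of_cycleType, numCycles_eq, ← card_fixed_add_card_support g, ← sum_cycleType,
    add_add_add_comm, ← two_mul, pow_add (-1 : ℤˣ) (2 * _), pow_mul, neg_one_sq, one_pow,
    one_mul, pow_add]

theorem numCycles_mul_swap_ne (g : Perm α) {u v : α} (huv : u ≠ v) :
    (g * swap u v).numCycles ≠ g.numCycles := by
  intro h
  have := sign_eq_neg_one_pow_numCycles (g * swap u v)
  rw [h, ← sign_eq_neg_one_pow_numCycles, sign_mul, sign_swap huv, mul_neg_one] at this
  exact Int.units_ne_iff_eq_neg.mpr rfl this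

theorem numCycles_mul_swap_mem_Icc (g : Perm α) (u v : α) :
    (g * swap u v).numCycles ∈
      Set.Icc (numOrbits ↥(zpowers g ⊔ zpowers (swap u v)) α)
        (numOrbits ↥(zpowers g ⊔ zpowers (swap u v)) α + 1) := by
  rw [← zpowers_mul_sup_zpowers g (swap u v)]
  exact ⟨numOrbits_le_of_le le_sup_left,
    numOrbits_le_numOrbits_sup_zpowers_swap_add_one _ u v⟩

theorem numCycles_mul_swap_of_sameCycle {g : Perm α} {u v : α} (huv : u ≠ v)
    (h : g.SameCycle u v) : (g * swap u v).numCycles = g.numCycles + 1 := by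
  have hK : numOrbits ↥(zpowers g ⊔ zpowers (swap u v)) α = g.numCycles :=
    numOrbits_sup_zpowers_swap_of_rel (orbitRel_of_sameCycle (mem_zpowers g) h)
  obtain ⟨hlo, hhi⟩ := numCycles_mul_swap_mem_Icc g u v
  have := numCycles_mul_swap_ne g huv
  omega

theorem numCycles_mul_swap_of_not_sameCycle {g : Perm α} {u v : α}
    (h : ¬ g.SameCycle u v) : (g * swap u v).numCycles + 1 = g.numCycles := by
  have huv : u ≠ v := fun huv => h (huv ▸ SameCycle.refl g u)
  have hK : numOrbits ↥(zpowers g ⊔ zpowers (swap u v)) α + 1 = g.numCycles :=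
    numOrbits_sup_zpowers_swap_of_not_rel (by rw [orbitRel_zpowers]; exact h)
  obtain ⟨hlo, hhi⟩ := numCycles_mul_swap_mem_Icc g u v
  have := numCycles_mul_swap_ne g huv
  omega

theorem numCycles_add_numCycles_add_numCycles_mul_le (x y : Perm α) :
    x.numCycles + y.numCycles + (x * y).numCycles ≤
      Fintype.card α + 2 * numOrbits (closure {x, y}) α := by
  by_cases hy : y = 1
  · subst hy
    rw [numCycles_one, mul_one, Set.pair_comm, closure_insert_one, ← zpowers_eq_closure]
    unfold numCycles
    omega
  obtain ⟨a, ha⟩ : ∃ a, y a ≠ a := not_forall.mp fun h => hy (Perm.ext h)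
  have hy' : (y * swap a (y a)).numCycles = y.numCycles + 1 :=
    numCycles_mul_swap_of_sameCycle (Ne.symm ha) (SameCycle.refl y a).apply_right
  have ih := numCycles_add_numCycles_add_numCycles_mul_le x (y * swap a (y a))
  have hK := numOrbits_le_of_le (α := α)
    (closure_pair_le_closure_pair_mul_sup_zpowers x y (swap a (y a)))
  rw [show x * y = x * (y * swap a (y a)) * swap a (y a) by simp [mul_assoc]]
  by_cases hxy' : (x * (y * swap a (y a))).SameCycle a (y a)
  · have := numCycles_mul_swap_of_sameCycle (Ne.symm ha) hxy'
    have : numOrbits ↥(closure {x, y * swap a (y a)} ⊔ zpowers (swap a (y a))) α =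
        numOrbits (closure {x, y * swap a (y a)}) α :=
      numOrbits_sup_zpowers_swap_of_rel (orbitRel_of_sameCycle (mul_mem_closure_pair _ _) hxy')
    omega
  · have := numCycles_mul_swap_of_not_sameCycle hxy'
    have := numOrbits_le_numOrbits_sup_zpowers_swap_add_one
      (closure {x, y * swap a (y a)}) a (y a)
    omega
termination_by Fintype.card α - y.numCycles
decreasing_by
  have := numCycles_le_card (y * swap a (y a))
  omega

theorem card_eq_card_fixed_add_mul_card_cycleType {g : Perm α} {p : ℕ} (hp : p.Prime)
    (hg : orderOf g = p) : Fintype.card α = #{a | g a = a} + p * Multiset.card g.cycleType := by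
  obtain ⟨k, hk⟩ := cycleType_prime_order (hg ▸ hp)
  rw [← card_fixed_add_card_support, ← sum_cycleType, hk, hg, Multiset.sum_replicate,
    Multiset.card_replicate, smul_eq_mul, mul_comm]

theorem sign_eq_one_of_odd_orderOf {g : Perm α} (h : Odd (orderOf g)) : sign g = 1 := by
  obtain ⟨k, hk⟩ := h
  have := congrArg sign (pow_orderOf_eq_one g)
  rwa [map_pow, map_one, hk, pow_succ, pow_mul, Int.units_sq, one_pow, one_mul] at this

theorem even_card_cycleType_of_orderOf_eq_two {g : Perm α} (hg : orderOf g = 2)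
    (hsign : sign g = 1) : Even (Multiset.card g.cycleType) := by
  obtain ⟨k, hk⟩ := cycleType_prime_order (hg ▸ Nat.prime_two)
  rw [sign_of_cycleType, neg_one_pow_eq_one_iff_even (by decide), hk, Multiset.sum_replicate,
    Multiset.card_replicate, hg, smul_eq_mul, Nat.even_iff] at hsign
  rw [hk, Multiset.card_replicate, Nat.even_iff]
  omega

end Equiv.Perm

open Equiv Perm MulAction in
/-- For a Hurwitz generating triple of a transitive permutation group of
    degree n, with r, s, t the fixed-point counts of the order-2, order-3
    and order-7 generators, the genus formula n = 84(g-1) + 21r + 28s + 36t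
    (g ≥ 0) gives 21r + 28s + 36t ≡ n (mod 84) and 21r + 28s + 36t ≤ n + 84. -/
theorem stmt_18 (n : ℕ) (x y : Equiv.Perm (Fin n))
    (hx : orderOf x = 2) (hy : orderOf y = 3) (hxy : orderOf (x * y) = 7)
    (htrans : MulAction.IsPretransitive (Subgroup.closure {x, y}) (Fin n)) :
    (21 * (Finset.univ.filter fun a => x a = a).card +
     28 * (Finset.univ.filter fun a => y a = a).card +
     36 * (Finset.univ.filter fun a => (x * y) a = a).card) ≡ n [MOD 84] ∧
    (21 * (Finset.univ.filter fun a => x a = a).card +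
     28 * (Finset.univ.filter fun a => y a = a).card +
     36 * (Finset.univ.filter fun a => (x * y) a = a).card) ≤ n + 84 := by
  have hcx := card_eq_card_fixed_add_mul_card_cycleType Nat.prime_two hx
  have hcy := card_eq_card_fixed_add_mul_card_cycleType Nat.prime_three hy
  have hcxy := card_eq_card_fixed_add_mul_card_cycleType (by norm_num) hxy
  have hy1 : sign y = 1 := sign_eq_one_of_odd_orderOf (by rw [hy]; decide)
  have hxy1 : sign (x * y) = 1 := sign_eq_one_of_odd_orderOf (by rw [hxy]; decide)
  have hsign : sign x = 1 := by simpa [hy1, hxy1] using (sign_mul x y).symm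
  obtain ⟨k, hk⟩ := even_card_cycleType_of_orderOf_eq_two hx hsign
  have hree := numCycles_add_numCycles_add_numCycles_mul_le x y
  have horb : numOrbits (Subgroup.closure {x, y}) (Fin n) ≤ 1 := numOrbits_le_one
  rw [numCycles_eq, numCycles_eq, numCycles_eq] at hree
  rw [Fintype.card_fin] at hcx hcy hcxy hree
  exact ⟨by unfold Nat.ModEq; omega, by omega⟩
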